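/- Let X be a manifold with an action of a finite group G, I a finite set, σ a permutation of I, and g ∈ G^I. With 𝔤 = ψ^σ(g) the cycle product and ν^σ(g) as above, the fixed point locus of the element gσ ∈ G^I ⋊ Σ_I acting on X^I equals ρ(ν^σ(g)⁻¹) applied to the product over σ-orbits a of the diagonal copies Δ^a of the fixed-point sets X^{𝔤_a}. -/

import Mathlib

/-- The action of `Σ_I` on `G^I` used to form the wreath product `G^I ⋊ Σ_I`:
`(h^σ)_i = h_{σ i}`, and the semidirect-product convention of Mathlib
`(g, σ) * (h, τ) = (g * φ σ h, σ τ)` realizes `gσ · hτ = g h^{σ⁻¹} στ`. -/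
def wrAct (G I : Type*) [Group G] : Equiv.Perm I →* MulAut (I → G) where
  toFun σ :=
    { toFun := fun g i => g (σ⁻¹ i)
      invFun := fun g i => g (σ i)
      left_inv := fun g => funext fun i => by simp
      right_inv := fun g => funext fun i => by simp
      map_mul' := fun g h => rfl }
  map_one' := by
    ext g i
    simp
  map_mul' := fun σ τ => by
    ext g i
    simp [Equiv.Perm.mul_apply]

/-- The wreath product `G^I ⋊ Σ_I`. -/
abbrev WreathProduct (G I : Type*) [Group G] : Type _ :=
  (I → G) ⋊[wrAct G I] Equiv.Perm I

/-- The (ordered) partial cycle product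
`g_{σ^{n-1}(i)} · g_{σ^{n-2}(i)} ⋯ g_{σ(i)} · g_i` of `g : I → G` along the
`σ`-trajectory of `i`; for `n` the size of the `σ`-orbit of `i` this is the
cycle product `ψ^σ(g)_a` of the orbit `a` of `i` with representative `i`. -/
def cycProd {G I : Type*} [Group G] (σ : Equiv.Perm I) (g : I → G) (i : I) (n : ℕ) : G :=
  ((List.range n).map fun k => g ((σ ^ (n - 1 - k)) i)).prod

/-- The element `ν^σ(g) ∈ G^I`, relative to a choice `rep` of orbit
representatives and the "position" function `m` (so `i = σ^(m i) (rep i)`):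
`ν^σ(g)_{σ^m(i_a)} = g_{σ^m(i_a)} ⋯ g_{σ(i_a)} g_{i_a}`. -/
def nuFun {G I : Type*} [Group G] (σ : Equiv.Perm I) (g : I → G)
    (rep : I → I) (m : I → ℕ) : I → G :=
  fun i => cycProd σ g (rep i) (m i + 1)

/-- The element `ε_𝔤 ∈ G^I` whose component at each orbit representative is the
cycle product of that orbit and is `1` elsewhere. -/
noncomputable def epsFun {G I : Type*} [Group G] [DecidableEq I] (σ : Equiv.Perm I) (g : I → G)
    (rep : I → I) : I → G :=
  fun i => if rep i = i then cycProd σ g i (Function.minimalPeriod (⇑σ) i) else 1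

/-!
Untwisting by `ν`: if `x` is fixed by `gσ`, then `ρ(ν_i) x_i = ρ(g_r) x_r` (`r` the representative
of the orbit of `i`) by walking back along the orbit, so `y := ρ(ν) x` is constant on orbits, and
going once around the orbit shows that `y_r` is fixed by the cycle product. Conversely,
`ν_{σ i} = g_{σ i} ν_i` except at the last point `i` of an orbit, where `σ i = r`, `ν_r = g_r`
and `ν_i` is the whole cycle product; so `x := ρ(ν⁻¹) y` satisfies the fixed point equation at
`i` exactly because `y` is orbit-constant and `y_r` is fixed by the cycle product.
-/

section CycProd

variable {G I : Type*} [Group G] (σ : Equiv.Perm I) (g : I → G) (r : I)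

@[simp]
lemma cycProd_zero : cycProd σ g r 0 = 1 := by
  simp [cycProd]

lemma cycProd_succ (n : ℕ) : cycProd σ g r (n + 1) = g ((σ ^ n) r) * cycProd σ g r n := by
  simp only [cycProd, List.range_succ_eq_map, List.map_cons, List.prod_cons, List.map_map]
  congr 2
  refine List.map_congr_left fun k _ => ?_
  simp only [Function.comp_apply, Nat.add_sub_cancel, Nat.sub_sub, Nat.succ_eq_one_add]

@[simp]
lemma cycProd_one : cycProd σ g r 1 = g r := by
  simp [cycProd_succ]

lemma apply_cycProd_of_fixed {X : Type*} (ρ : G → X → X)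
    (hρmul : ∀ a b : G, ρ (a * b) = ρ b ∘ ρ a) {x : I → X}
    (hx : ∀ i, ρ (g (σ i)) (x (σ i)) = x i) (n : ℕ) :
    ρ (cycProd σ g r (n + 1)) (x ((σ ^ n) r)) = ρ (g r) (x r) := by
  induction n with
  | zero => simp
  | succ n ih =>
    rw [cycProd_succ, hρmul, Function.comp_apply, pow_succ', Equiv.Perm.mul_apply, hx, ih]

end CycProd

section OrbitData

variable {I : Type*} {σ : Equiv.Perm I} {rep : I → I} {m : I → ℕ}

lemma rep_pow_apply (hrep : ∀ i, rep (σ i) = rep i) (k : ℕ) (j : I) :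
    rep ((σ ^ k) j) = rep j := by
  rw [Equiv.Perm.coe_pow]
  exact congrFun (Function.iterate_invariant (funext hrep) k) j

lemma rep_rep (hrep : ∀ i, rep (σ i) = rep i) (hm : ∀ i, (σ ^ m i) (rep i) = i) (i : I) :
    rep (rep i) = rep i := by
  conv_rhs => rw [← hm i, rep_pow_apply hrep]

lemma m_rep (hrep : ∀ i, rep (σ i) = rep i) (hm : ∀ i, (σ ^ m i) (rep i) = i)
    (hmlt : ∀ i, m i < Function.minimalPeriod σ (rep i)) (i : I) : m (rep i) = 0 := by
  have hper : Function.IsPeriodicPt σ (m (rep i)) (rep i) := by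
    simpa [Function.IsPeriodicPt, Function.IsFixedPt, ← Equiv.Perm.coe_pow, rep_rep hrep hm]
      using hm (rep i)
  exact hper.eq_zero_of_lt_minimalPeriod (by simpa [rep_rep hrep hm] using hmlt (rep i))

lemma m_apply_of_lt (hrep : ∀ i, rep (σ i) = rep i) (hm : ∀ i, (σ ^ m i) (rep i) = i)
    (hmlt : ∀ i, m i < Function.minimalPeriod σ (rep i)) {i : I}
    (hi : m i + 1 < Function.minimalPeriod σ (rep i)) : m (σ i) = m i + 1 := by
  refine Function.iterate_injOn_Iio_minimalPeriod (by simpa [hrep] using hmlt (σ i)) hi ?_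
  simp only [← Equiv.Perm.coe_pow]
  rw [pow_succ', Equiv.Perm.mul_apply, hm i, ← hrep i, hm (σ i)]

lemma apply_eq_rep_of_not_lt (hm : ∀ i, (σ ^ m i) (rep i) = i)
    (hmlt : ∀ i, m i < Function.minimalPeriod σ (rep i)) {i : I}
    (hi : ¬ m i + 1 < Function.minimalPeriod σ (rep i)) : σ i = rep i := by
  have hp : m i + 1 = Function.minimalPeriod σ (rep i) := by
    have := hmlt i
    omega
  have hper := Function.iterate_minimalPeriod (f := σ) (x := rep i)
  rwa [← hp, ← Equiv.Perm.coe_pow, pow_succ', Equiv.Perm.mul_apply, hm i] at hper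

variable {G : Type*} [Group G] (g : I → G)

lemma nuFun_rep (hrep : ∀ i, rep (σ i) = rep i) (hm : ∀ i, (σ ^ m i) (rep i) = i)
    (hmlt : ∀ i, m i < Function.minimalPeriod σ (rep i)) (i : I) :
    nuFun σ g rep m (rep i) = g (rep i) := by
  rw [nuFun, rep_rep hrep hm, m_rep hrep hm hmlt, cycProd_one]

lemma nuFun_apply_of_lt (hrep : ∀ i, rep (σ i) = rep i) (hm : ∀ i, (σ ^ m i) (rep i) = i)
    (hmlt : ∀ i, m i < Function.minimalPeriod σ (rep i)) {i : I}
    (hi : m i + 1 < Function.minimalPeriod σ (rep i)) :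
    nuFun σ g rep m (σ i) = g (σ i) * nuFun σ g rep m i := by
  rw [nuFun, nuFun, hrep, m_apply_of_lt hrep hm hmlt hi, cycProd_succ, pow_succ',
    Equiv.Perm.mul_apply, hm i]

end OrbitData

section RightAction

variable {G X : Type*} [Group G] {ρ : G → X → X}

lemma apply_apply_of_mul (hρmul : ∀ a b : G, ρ (a * b) = ρ b ∘ ρ a) (a b : G) (z : X) :
    ρ b (ρ a z) = ρ (a * b) z := by
  rw [hρmul]
  rfl

lemma inv_apply_apply (hρ1 : ρ 1 = id) (hρmul : ∀ a b : G, ρ (a * b) = ρ b ∘ ρ a)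
    (a : G) (z : X) : ρ a⁻¹ (ρ a z) = z := by
  rw [apply_apply_of_mul hρmul, mul_inv_cancel, hρ1, id]

lemma apply_inv_apply (hρ1 : ρ 1 = id) (hρmul : ∀ a b : G, ρ (a * b) = ρ b ∘ ρ a)
    (a : G) (z : X) : ρ a (ρ a⁻¹ z) = z := by
  simpa using inv_apply_apply hρ1 hρmul a⁻¹ z

end RightAction

section FixedLocus

variable {G I X : Type*} [Group G] {ρ : G → X → X} {σ : Equiv.Perm I} {g : I → G}
  {rep : I → I} {m : I → ℕ}

lemma exists_orbit_const_of_fixed (hρ1 : ρ 1 = id) (hρmul : ∀ a b : G, ρ (a * b) = ρ b ∘ ρ a)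
    (hrep : ∀ i, rep (σ i) = rep i) (hm : ∀ i, (σ ^ m i) (rep i) = i)
    (hmlt : ∀ i, m i < Function.minimalPeriod σ (rep i)) {x : I → X}
    (hx : ∀ i, ρ (g (σ i)) (x (σ i)) = x i) :
    ∃ y : I → X, (∀ i, y i = y (rep i)) ∧
      (∀ i, rep i = i → ρ (cycProd σ g i (Function.minimalPeriod σ i)) (y i) = y i) ∧
      ∀ i, x i = ρ (nuFun σ g rep m i)⁻¹ (y i) := by
  refine ⟨fun i => ρ (nuFun σ g rep m i) (x i), fun i => ?_, fun i hi => ?_,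
    fun i => (inv_apply_apply hρ1 hρmul _ _).symm⟩
  · calc ρ (cycProd σ g (rep i) (m i + 1)) (x i)
        = ρ (cycProd σ g (rep i) (m i + 1)) (x ((σ ^ m i) (rep i))) := by rw [hm]
      _ = ρ (g (rep i)) (x (rep i)) := apply_cycProd_of_fixed σ g _ ρ hρmul hx _
      _ = ρ (nuFun σ g rep m (rep i)) (x (rep i)) := by rw [nuFun_rep g hrep hm hmlt]
  · have hν : nuFun σ g rep m i = g i := by
      simpa [hi] using nuFun_rep g hrep hm hmlt i
    have hcyc := apply_cycProd_of_fixed σ g i ρ hρmul hx (Function.minimalPeriod σ i)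
    rw [cycProd_succ, Equiv.Perm.coe_pow, Function.iterate_minimalPeriod, hρmul] at hcyc
    simpa [hν] using hcyc

lemma fixed_of_orbit_const (hρ1 : ρ 1 = id) (hρmul : ∀ a b : G, ρ (a * b) = ρ b ∘ ρ a)
    (hrep : ∀ i, rep (σ i) = rep i) (hm : ∀ i, (σ ^ m i) (rep i) = i)
    (hmlt : ∀ i, m i < Function.minimalPeriod σ (rep i)) {y : I → X}
    (hy : ∀ i, y i = y (rep i))
    (hfix : ∀ i, rep i = i → ρ (cycProd σ g i (Function.minimalPeriod σ i)) (y i) = y i)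
    (i : I) :
    ρ (g (σ i)) (ρ (nuFun σ g rep m (σ i))⁻¹ (y (σ i))) = ρ (nuFun σ g rep m i)⁻¹ (y i) := by
  have hyσ : y (σ i) = y i := by rw [hy, hrep, ← hy]
  by_cases hi : m i + 1 < Function.minimalPeriod σ (rep i)
  · rw [nuFun_apply_of_lt g hrep hm hmlt hi, hyσ, apply_apply_of_mul hρmul, mul_inv_rev,
      inv_mul_cancel_right]
  · have hσi := apply_eq_rep_of_not_lt hm hmlt hi
    have hν : nuFun σ g rep m i = cycProd σ g (rep i) (Function.minimalPeriod σ (rep i)) := by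
      rw [nuFun]
      congr
      have := hmlt i
      omega
    rw [hσi, nuFun_rep g hrep hm hmlt, apply_inv_apply hρ1 hρmul, hν, hy i]
    conv_rhs => rw [← hfix (rep i) (rep_rep hrep hm i)]
    rw [inv_apply_apply hρ1 hρmul]

end FixedLocus

theorem stmt9_general {G I X : Type*} [Group G]
    (ρ : G → X → X) (hρ1 : ρ 1 = id)
    (hρmul : ∀ a b : G, ρ (a * b) = ρ b ∘ ρ a)
    (σ : Equiv.Perm I) (g : I → G) (rep : I → I) (m : I → ℕ)
    (hrep : ∀ i, rep (σ i) = rep i)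
    (hm : ∀ i, (σ ^ m i) (rep i) = i)
    (hmlt : ∀ i, m i < Function.minimalPeriod (⇑σ) (rep i)) :
    {x : I → X | ∀ i, ρ (g (σ i)) (x (σ i)) = x i}
      = {x : I → X | ∃ y : I → X,
          (∀ i, y i = y (rep i)) ∧
          (∀ i, rep i = i →
            ρ (cycProd σ g i (Function.minimalPeriod (⇑σ) i)) (y i) = y i) ∧
          ∀ i, x i = ρ (nuFun σ g rep m i)⁻¹ (y i)} := by
  ext x
  constructor
  · exact exists_orbit_const_of_fixed hρ1 hρmul hrep hm hmlt
  · rintro ⟨y, hy, hfix, hxy⟩ i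
    simpa only [hxy] using fixed_of_orbit_const hρ1 hρmul hrep hm hmlt hy hfix i

theorem stmt9 {G I X : Type*} [Group G] [Fintype I] [DecidableEq I]
    (ρ : G → X → X) (hρ1 : ρ 1 = id)
    (hρmul : ∀ a b : G, ρ (a * b) = ρ b ∘ ρ a)
    (σ : Equiv.Perm I) (g : I → G) (rep : I → I) (m : I → ℕ)
    (hrep : ∀ i, rep (σ i) = rep i)
    (hm : ∀ i, (σ ^ m i) (rep i) = i)
    (hmlt : ∀ i, m i < Function.minimalPeriod (⇑σ) (rep i)) :
    {x : I → X | ∀ i, ρ (g (σ i)) (x (σ i)) = x i}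
      = {x : I → X | ∃ y : I → X,
          (∀ i, y i = y (rep i)) ∧
          (∀ i, rep i = i →
            ρ (cycProd σ g i (Function.minimalPeriod (⇑σ) i)) (y i) = y i) ∧
          ∀ i, x i = ρ (nuFun σ g rep m i)⁻¹ (y i)} :=
  stmt9_general ρ hρ1 hρmul σ g rep m hrep hm hmlt
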